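/- For any unitary matrices U₁ and U₂ on the same finite-dimensional complex Hilbert space, α(U₁† U₂) ≤ α(U₁) + α(U₂), where U₁† denotes the conjugate transpose of U₁. -/

import Mathlib

open Matrix
open scoped Matrix.Norms.L2Operator Kronecker ComplexOrder

noncomputable section

/-- Maximum argument (taken in `(-π, π]`) of the eigenvalues of a matrix. -/
noncomputable def argMaxSpec {n : ℕ} (U : Matrix (Fin n) (Fin n) ℂ) : ℝ :=
  sSup (Complex.arg '' spectrum ℂ U)

/-- Minimum argument (taken in `(-π, π]`) of the eigenvalues of a matrix. -/
noncomputable def argMinSpec {n : ℕ} (U : Matrix (Fin n) (Fin n) ℂ) : ℝ :=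
  sInf (Complex.arg '' spectrum ℂ U)

/-- Length `α̃(U)` of the shortest arc of the unit circle containing all eigenvalues of `U`. -/
noncomputable def arcLength {n : ℕ} (U : Matrix (Fin n) (Fin n) ℂ) : ℝ :=
  sInf { L : ℝ | 0 ≤ L ∧ ∃ θ : ℝ, ∀ z ∈ spectrum ℂ U, ∃ φ : ℝ,
    θ ≤ φ ∧ φ ≤ θ + L ∧ z = Complex.exp (φ * Complex.I) }

/-- The phase range `α(U) = min {π, α̃(U)}`. -/
noncomputable def phaseRange {n : ℕ} (U : Matrix (Fin n) (Fin n) ℂ) : ℝ :=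
  min Real.pi (arcLength U)

/-!
If the spectrum of a normal matrix `A` lies in a closed half-plane `t ≤ Re (c z)`, then
`ℜ (c A) - t` is positive semidefinite by the continuous functional calculus, so every value
`x* A x` lies in that half-plane as well. Intersecting half-planes, when the spectrum lies on an arc
`[θ, θ + L]` of the unit circle with `L < π`, each `x* A x` with `x ≠ 0` lies in the open sector
spanned by that arc. If `z` is an eigenvalue of `U₁ᴴ U₂` with eigenvector `x`, then
`U₂ x = z U₁ x`, hence `x* U₂ x = z (x* U₁ x)`, and comparing arguments puts `z` on the arc
`[θ₂ - θ₁ - L₁, θ₂ + L₂ - θ₁]`.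
-/

open Real in
lemma abs_le_of_sin_add_nonneg_of_sin_sub_nonneg {a β : ℝ} (ha : |a| < π / 2) (hβ : 0 ≤ β)
    (h₁ : 0 ≤ sin (β + a)) (h₂ : 0 ≤ sin (β - a)) : |a| ≤ β := by
  obtain ⟨ha₁, ha₂⟩ := abs_lt.mp ha
  refine abs_le.mpr ⟨?_, ?_⟩
  · by_contra! h
    exact h₁.not_gt (sin_neg_of_neg_of_neg_pi_lt (by linarith) (by linarith))
  · by_contra! h
    exact h₂.not_gt (sin_neg_of_neg_of_neg_pi_lt (by linarith) (by linarith))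

namespace Complex

lemma exp_mul_I_mul_exp_mul_I (s φ : ℝ) :
    exp (s * I) * exp (φ * I) = exp ((s + φ : ℝ) * I) := by
  rw [← exp_add]
  push_cast
  ring_nf

lemma exp_mul_I_mul_eq_norm_mul_exp (s : ℝ) (v : ℂ) :
    exp (s * I) * v = ‖v‖ * exp ((s + arg v : ℝ) * I) := by
  conv_lhs => rw [← norm_mul_exp_arg_mul_I v]
  rw [mul_left_comm, exp_mul_I_mul_exp_mul_I]

lemma im_exp_mul_I_mul (s : ℝ) (v : ℂ) :
    (exp (s * I) * v).im = ‖v‖ * Real.sin (s + arg v) := by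
  rw [exp_mul_I_mul_eq_norm_mul_exp, im_ofReal_mul, exp_ofReal_mul_I_im]

end Complex

def SpectrumInArc {A : Type*} [Ring A] [Algebra ℂ A] (a : A) (θ L : ℝ) : Prop :=
  ∀ z ∈ spectrum ℂ a, ∃ φ : ℝ, θ ≤ φ ∧ φ ≤ θ + L ∧ z = Complex.exp (φ * Complex.I)

lemma spectrumInArc_of_mem_unitary {E : Type*} [CStarAlgebra E] {u : E} (hu : u ∈ unitary E) :
    SpectrumInArc u (-Real.pi) (2 * Real.pi) := fun z hz =>
  ⟨z.arg, (Complex.neg_pi_lt_arg z).le, by linarith [Complex.arg_le_pi z], by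
    simpa [spectrum.norm_eq_one_of_unitary hu hz] using (Complex.norm_mul_exp_arg_mul_I z).symm⟩

open scoped MatrixOrder ComplexStarModule

namespace Matrix

variable {n : Type*} [Fintype n]

lemma dotProduct_conjTranspose_mulVec {α : Type*} [CommSemiring α] [StarRing α]
    (A : Matrix n n α) (x : n → α) :
    star x ⬝ᵥ Aᴴ *ᵥ x = star (star x ⬝ᵥ A *ᵥ x) := by
  rw [star_dotProduct, star_mulVec, conjTranspose_conjTranspose, dotProduct_mulVec]

lemma dotProduct_mulVec_realPart (A : Matrix n n ℂ) (x : n → ℂ) :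
    star x ⬝ᵥ (ℜ A : Matrix n n ℂ) *ᵥ x = ((star x ⬝ᵥ A *ᵥ x).re : ℂ) := by
  rw [realPart_apply_coe, Complex.re_eq_add_conj, smul_mulVec, add_mulVec, dotProduct_smul,
    dotProduct_add, star_eq_conjTranspose, dotProduct_conjTranspose_mulVec, Complex.star_def,
    Complex.real_smul, div_eq_inv_mul]
  push_cast
  ring

lemma exists_mulVec_eq_smul_of_mem_spectrum {K : Type*} [Field K] [DecidableEq n]
    {M : Matrix n n K} {z : K} (hz : z ∈ spectrum K M) : ∃ x : n → K, x ≠ 0 ∧ M *ᵥ x = z • x := by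
  rw [← spectrum_toLin', ← Module.End.hasEigenvalue_iff_mem_spectrum] at hz
  obtain ⟨x, hx⟩ := hz.exists_hasEigenvector
  exact ⟨x, hx.2, hx.apply_eq_smul⟩

variable [DecidableEq n]

lemma le_re_mul_dotProduct_mulVec {A : Matrix n n ℂ} (hA : IsStarNormal A) {c : ℂ} {t : ℝ}
    (h : ∀ z ∈ spectrum ℂ A, t ≤ (c * z).re) (x : n → ℂ) :
    t * (star x ⬝ᵥ x).re ≤ (c * (star x ⬝ᵥ A *ᵥ x)).re := by
  have hspec : ∀ s ∈ spectrum ℝ (ℜ (c • A) : Matrix n n ℂ), t ≤ s := by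
    rw [spectrum_realPart' (c • A), ← cfc_const_mul_id c A, cfc_map_spectrum (c * ·) A]
    rintro _ ⟨_, ⟨z, hz, rfl⟩, rfl⟩
    exact h z hz
  have hpos : ((ℜ (c • A) : Matrix n n ℂ) - algebraMap ℝ _ t).PosSemidef :=
    Matrix.le_iff.mp ((algebraMap_le_iff_le_spectrum (ℜ (c • A)).2).mpr hspec)
  have := hpos.re_dotProduct_nonneg x
  rw [sub_mulVec, dotProduct_sub, dotProduct_mulVec_realPart, smul_mulVec, dotProduct_smul,
    Algebra.algebraMap_eq_smul_one, smul_mulVec, one_mulVec, dotProduct_smul] at this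
  simpa using this

open Complex in
lemma re_dotProduct_mulVec_pos_and_abs_arg_le {A : Matrix n n ℂ} (hA : IsStarNormal A)
    {β : ℝ} (hβ₀ : 0 ≤ β) (hβ : β < Real.pi / 2)
    (hspec : ∀ z ∈ spectrum ℂ A, ∃ ψ : ℝ, |ψ| ≤ β ∧ z = exp (ψ * I)) {x : n → ℂ} (hx : x ≠ 0) :
    0 < (star x ⬝ᵥ A *ᵥ x).re ∧ |arg (star x ⬝ᵥ A *ᵥ x)| ≤ β := by
  set w := star x ⬝ᵥ A *ᵥ x
  have hre : 0 < w.re := by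
    have hxx : 0 < (star x ⬝ᵥ x).re := (pos_iff.mp (dotProduct_star_self_pos_iff.mpr hx)).1
    have hcos : 0 < Real.cos β := Real.cos_pos_of_mem_Ioo ⟨by linarith, hβ⟩
    have := le_re_mul_dotProduct_mulVec hA (c := 1) (t := Real.cos β) (fun z hz => ?_) x
    · rw [one_mul] at this
      exact (mul_pos hcos hxx).trans_le this
    obtain ⟨ψ, hψ, rfl⟩ := hspec z hz
    rw [one_mul, exp_ofReal_mul_I_re, ← Real.cos_abs ψ]
    exact Real.cos_le_cos_of_nonneg_of_le_pi (abs_nonneg ψ) (by linarith) hψ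
  have hw : 0 < ‖w‖ := norm_pos_iff.mpr fun h => by simp [h] at hre
  -- `w` lies in every closed half-plane `0 ≤ Im (exp (s i) ·)` containing the spectrum
  have hsin : ∀ s : ℝ, (∀ ψ : ℝ, |ψ| ≤ β → 0 ≤ Real.sin (s + ψ)) → 0 ≤ Real.sin (s + arg w) := by
    intro s hs
    have := le_re_mul_dotProduct_mulVec hA (c := -I * exp (s * I)) (t := 0) (fun z hz => ?_) x
    · rw [zero_mul, mul_assoc, neg_mul, neg_re, I_mul_re, neg_neg, im_exp_mul_I_mul] at this
      exact (mul_nonneg_iff_of_pos_left hw).mp this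
    obtain ⟨ψ, hψ, rfl⟩ := hspec z hz
    rw [mul_assoc, neg_mul, neg_re, I_mul_re, neg_neg, exp_mul_I_mul_exp_mul_I,
      exp_ofReal_mul_I_im]
    exact hs ψ hψ
  have hsin_pi_sub : ∀ y : ℝ, Real.sin (Real.pi - β + y) = Real.sin (β - y) := fun y => by
    rw [← Real.sin_pi_sub]; ring_nf
  refine ⟨hre, abs_le_of_sin_add_nonneg_of_sin_sub_nonneg
    (abs_arg_lt_pi_div_two_iff.mpr (Or.inl hre)) hβ₀ (hsin β fun ψ hψ => ?_)
    (hsin_pi_sub (arg w) ▸ hsin (Real.pi - β) fun ψ hψ => hsin_pi_sub ψ ▸ ?_)⟩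
  · exact Real.sin_nonneg_of_nonneg_of_le_pi (by linarith [neg_abs_le ψ])
      (by linarith [le_abs_self ψ])
  · exact Real.sin_nonneg_of_nonneg_of_le_pi (by linarith [le_abs_self ψ])
      (by linarith [neg_abs_le ψ])

open Complex in
lemma exists_dotProduct_mulVec_eq_of_spectrumInArc {A : Matrix n n ℂ} (hA : IsStarNormal A)
    {θ L : ℝ} (hL₀ : 0 ≤ L) (hL : L < Real.pi) (hspec : SpectrumInArc A θ L)
    {x : n → ℂ} (hx : x ≠ 0) :
    ∃ r : ℝ, 0 < r ∧ ∃ φ : ℝ, θ ≤ φ ∧ φ ≤ θ + L ∧ star x ⬝ᵥ A *ᵥ x = r * exp (φ * I) := by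
  set c := exp (↑(-(θ + L / 2)) * I)
  have hspec' : ∀ z ∈ spectrum ℂ (c • A), ∃ ψ : ℝ, |ψ| ≤ L / 2 ∧ z = exp (ψ * I) := by
    rw [← cfc_const_mul_id c A, cfc_map_spectrum (c * ·) A]
    rintro _ ⟨_, hz, rfl⟩
    obtain ⟨φ, hφ₁, hφ₂, rfl⟩ := hspec _ hz
    exact ⟨-(θ + L / 2) + φ, abs_le.mpr ⟨by linarith, by linarith⟩, exp_mul_I_mul_exp_mul_I _ _⟩
  obtain ⟨hre, harg⟩ :=
    re_dotProduct_mulVec_pos_and_abs_arg_le inferInstance (by linarith) (by linarith) hspec' hx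
  rw [smul_mulVec, dotProduct_smul, smul_eq_mul] at hre harg
  set v := c * (star x ⬝ᵥ A *ᵥ x) with hv
  refine ⟨‖v‖, norm_pos_iff.mpr fun h => by simp [h] at hre, θ + L / 2 + arg v,
    by linarith [neg_abs_le (arg v)], by linarith [le_abs_self (arg v)], ?_⟩
  rw [← exp_mul_I_mul_eq_norm_mul_exp, hv, ← mul_assoc, exp_mul_I_mul_exp_mul_I]
  simp

lemma spectrumInArc_conjTranspose_mul {U₁ U₂ : Matrix n n ℂ} (hU₁ : U₁ ∈ unitaryGroup n ℂ)
    (hU₂ : U₂ ∈ unitaryGroup n ℂ) {θ₁ θ₂ L₁ L₂ : ℝ} (hL₁₀ : 0 ≤ L₁) (hL₁ : L₁ < Real.pi)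
    (hL₂₀ : 0 ≤ L₂) (hL₂ : L₂ < Real.pi) (h₁ : SpectrumInArc U₁ θ₁ L₁)
    (h₂ : SpectrumInArc U₂ θ₂ L₂) :
    SpectrumInArc (U₁ᴴ * U₂) (θ₂ - θ₁ - L₁) (L₁ + L₂) := by
  intro z hz
  obtain ⟨x, hx, hzx⟩ := exists_mulVec_eq_smul_of_mem_spectrum hz
  have hU₂x : U₂ *ᵥ x = z • U₁ *ᵥ x := by
    rw [← mulVec_smul, ← hzx, mulVec_mulVec, ← mul_assoc, ← star_eq_conjTranspose,
      Unitary.mul_star_self_of_mem hU₁, one_mul]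
  obtain ⟨r₁, hr₁, φ₁, hφ₁, hφ₁', hw₁⟩ :=
    exists_dotProduct_mulVec_eq_of_spectrumInArc (isStarNormal_of_mem_unitary hU₁) hL₁₀ hL₁ h₁ hx
  obtain ⟨r₂, hr₂, φ₂, hφ₂, hφ₂', hw₂⟩ :=
    exists_dotProduct_mulVec_eq_of_spectrumInArc (isStarNormal_of_mem_unitary hU₂) hL₂₀ hL₂ h₂ hx
  have hw : z * (r₁ * Complex.exp (φ₁ * Complex.I)) = r₂ * Complex.exp (φ₂ * Complex.I) := by
    rw [← hw₁, ← hw₂, hU₂x, dotProduct_smul, smul_eq_mul]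
  have hz₁ : ‖z‖ = 1 := by
    refine spectrum.norm_eq_one_of_unitary ?_ hz
    rw [← star_eq_conjTranspose]
    exact mul_mem (Unitary.star_mem hU₁) hU₂
  have hr : r₂ = r₁ := by
    simpa [hz₁, abs_of_pos hr₁, abs_of_pos hr₂] using (congrArg norm hw).symm
  refine ⟨φ₂ - φ₁, by linarith, by linarith, ?_⟩
  refine mul_right_cancel₀ (mul_ne_zero (by exact_mod_cast hr₁.ne') (Complex.exp_ne_zero _))
    (hw.trans ?_)
  rw [hr, mul_left_comm, Complex.exp_mul_I_mul_exp_mul_I, sub_add_cancel]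

end Matrix

lemma phaseRange_nonneg {n : ℕ} (U : Matrix (Fin n) (Fin n) ℂ) : 0 ≤ phaseRange U :=
  le_min Real.pi_pos.le (Real.sInf_nonneg fun _ hL => hL.1)

lemma arcLength_le_of_spectrumInArc {n : ℕ} {U : Matrix (Fin n) (Fin n) ℂ} {θ L : ℝ}
    (hL : 0 ≤ L) (h : SpectrumInArc U θ L) : arcLength U ≤ L :=
  csInf_le ⟨0, fun _ hL => hL.1⟩ ⟨hL, θ, h⟩

lemma exists_spectrumInArc_of_arcLength_lt {n : ℕ} {U : Matrix (Fin n) (Fin n) ℂ}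
    (hU : U ∈ Matrix.unitaryGroup (Fin n) ℂ) {b : ℝ} (h : arcLength U < b) :
    ∃ L θ : ℝ, 0 ≤ L ∧ L < b ∧ SpectrumInArc U θ L := by
  obtain ⟨L, ⟨hL, θ, hθ⟩, hLb⟩ :=
    exists_lt_of_csInf_lt (s := {L | 0 ≤ L ∧ ∃ θ, SpectrumInArc U θ L})
      ⟨2 * Real.pi, by positivity, -Real.pi, spectrumInArc_of_mem_unitary hU⟩ h
  exact ⟨L, θ, hL, hLb, hθ⟩

lemma arcLength_conjTranspose_mul_le {n : ℕ} {U₁ U₂ : Matrix (Fin n) (Fin n) ℂ}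
    (hU₁ : U₁ ∈ Matrix.unitaryGroup (Fin n) ℂ) (hU₂ : U₂ ∈ Matrix.unitaryGroup (Fin n) ℂ)
    (h₁ : arcLength U₁ < Real.pi) (h₂ : arcLength U₂ < Real.pi) :
    arcLength (U₁ᴴ * U₂) ≤ arcLength U₁ + arcLength U₂ := by
  refine le_of_forall_pos_lt_add fun ε hε => ?_
  obtain ⟨L₁, θ₁, hL₁₀, hL₁, hθ₁⟩ :=
    exists_spectrumInArc_of_arcLength_lt hU₁ (lt_min h₁ (lt_add_of_pos_right _ (half_pos hε)))
  obtain ⟨L₂, θ₂, hL₂₀, hL₂, hθ₂⟩ :=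
    exists_spectrumInArc_of_arcLength_lt hU₂ (lt_min h₂ (lt_add_of_pos_right _ (half_pos hε)))
  rw [lt_min_iff] at hL₁ hL₂
  calc arcLength (U₁ᴴ * U₂) ≤ L₁ + L₂ := arcLength_le_of_spectrumInArc (add_nonneg hL₁₀ hL₂₀)
        (Matrix.spectrumInArc_conjTranspose_mul hU₁ hU₂ hL₁₀ hL₁.1 hL₂₀ hL₂.1 hθ₁ hθ₂)
    _ < arcLength U₁ + arcLength U₂ + ε := by linarith [hL₁.2, hL₂.2]

/-- `α(U₁† U₂) ≤ α(U₁) + α(U₂)` for unitaries `U₁, U₂`. -/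
theorem phaseRange_conjTranspose_mul_le {n : ℕ} (U₁ U₂ : Matrix (Fin n) (Fin n) ℂ)
    (hU₁ : U₁ ∈ Matrix.unitaryGroup (Fin n) ℂ) (hU₂ : U₂ ∈ Matrix.unitaryGroup (Fin n) ℂ) :
    phaseRange (U₁ᴴ * U₂) ≤ phaseRange U₁ + phaseRange U₂ := by
  by_cases h : arcLength U₁ < Real.pi ∧ arcLength U₂ < Real.pi
  · calc phaseRange (U₁ᴴ * U₂) ≤ arcLength (U₁ᴴ * U₂) := min_le_right _ _
      _ ≤ arcLength U₁ + arcLength U₂ := arcLength_conjTranspose_mul_le hU₁ hU₂ h.1 h.2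
      _ = phaseRange U₁ + phaseRange U₂ := by
        rw [phaseRange, phaseRange, min_eq_right h.1.le, min_eq_right h.2.le]
  · have hπ : phaseRange U₁ = Real.pi ∨ phaseRange U₂ = Real.pi := by
      rw [not_and_or, not_lt, not_lt] at h
      exact h.imp min_eq_left min_eq_left
    calc phaseRange (U₁ᴴ * U₂) ≤ Real.pi := min_le_left _ _
      _ ≤ phaseRange U₁ + phaseRange U₂ := by
        rcases hπ with hπ | hπ <;> linarith [phaseRange_nonneg U₁, phaseRange_nonneg U₂]
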